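/- Let J ∈ ℝ^{3×3} be symmetric and define J_d = (1/2)tr(J)I - J. If F = exp(S(θ)) is given by the Rodrigues formula for θ ∈ ℝ³, then F J_d - J_d Fᵀ = S(g(θ)) where g(θ) = sin‖θ‖/‖θ‖ · Jθ + (1-cos‖θ‖)/‖θ‖² · θ × Jθ, i.e. the implicit LGVI equation hS(p) = FJ_d - J_dFᵀ is equivalent to the vector equation hp = g(θ). -/

import Mathlib

open Matrix

/-- The cross-product (hat) operator matrix `S(x)`. -/
def hat (x : Fin 3 → ℝ) : Matrix (Fin 3) (Fin 3) ℝ :=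
  !![0, -x 2, x 1; x 2, 0, -x 0; -x 1, x 0, 0]

/-- Reinterpret a plain vector in `Fin 3 → ℝ` as an element of Euclidean 3-space. -/
def toE (x : Fin 3 → ℝ) : EuclideanSpace ℝ (Fin 3) := WithLp.toLp 2 x

/-!
With `S = hat θ` one has `Sᵀ = -S`, so `F Jd - Jd Fᵀ = a (S Jd + Jd S) + b (S² Jd - Jd S²)` for
`F = 1 + a S + b S²`. For symmetric `J` the anticommutator `S(x) Jd + Jd S(x)` equals `S(J x)`,
and then `S² Jd - Jd S² = [S, S Jd + Jd S] = [S(θ), S(J θ)] = S(θ × J θ)`. Since `S` is linear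
and injective, the matrix equation `h S(p) = F Jd - Jd Fᵀ` is equivalent to `h p = g`.
The identity holds for arbitrary coefficients `a`, `b`, not only for the Rodrigues ones.
-/

noncomputable def nonstandardInertia (J : Matrix (Fin 3) (Fin 3) ℝ) : Matrix (Fin 3) (Fin 3) ℝ :=
  ((1 : ℝ) / 2 * J.trace) • 1 - J

lemma hat_mulVec (x y : Fin 3 → ℝ) : hat x *ᵥ y = x ⨯₃ y := by
  ext i
  fin_cases i <;> simp [hat, cross_apply, mulVec, dotProduct, Fin.sum_univ_three] <;> ring

lemma hat_add (x y : Fin 3 → ℝ) : hat (x + y) = hat x + hat y :=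
  mulVec_injective <| funext fun z => by simp only [add_mulVec, hat_mulVec, map_add,
    LinearMap.add_apply]

lemma hat_smul (c : ℝ) (x : Fin 3 → ℝ) : hat (c • x) = c • hat x :=
  mulVec_injective <| funext fun z => by simp only [smul_mulVec, hat_mulVec, map_smul,
    LinearMap.smul_apply]

lemma hat_injective : Function.Injective hat := by
  intro x y hxy
  funext i
  fin_cases i
  · simpa [hat] using congrFun (congrFun hxy 2) 1
  · simpa [hat] using congrFun (congrFun hxy 0) 2
  · simpa [hat] using congrFun (congrFun hxy 1) 0

lemma hat_transpose (x : Fin 3 → ℝ) : (hat x)ᵀ = -hat x := by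
  ext i j
  fin_cases i <;> fin_cases j <;> simp [hat]

lemma hat_mul_sub_hat_mul (x y : Fin 3 → ℝ) : hat x * hat y - hat y * hat x = hat (x ⨯₃ y) :=
  mulVec_injective <| funext fun z => by
    simp only [sub_mulVec, ← mulVec_mulVec, hat_mulVec, cross_cross]

lemma hat_mul_add_nonstandardInertia_mul_hat {J : Matrix (Fin 3) (Fin 3) ℝ} (hJ : Jᵀ = J)
    (x : Fin 3 → ℝ) :
    hat x * nonstandardInertia J + nonstandardInertia J * hat x = hat (J *ᵥ x) := by
  have h01 : J 0 1 = J 1 0 := by simpa using congrFun (congrFun hJ 1) 0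
  have h02 : J 0 2 = J 2 0 := by simpa using congrFun (congrFun hJ 2) 0
  have h12 : J 1 2 = J 2 1 := by simpa using congrFun (congrFun hJ 2) 1
  ext i j
  fin_cases i <;> fin_cases j <;>
    simp [nonstandardInertia, hat, mul_apply, mulVec, vecMul, dotProduct, trace,
      Fin.sum_univ_three, one_apply, h01, h02, h12] <;> ring

lemma hat_sq_mul_nonstandardInertia_sub {J : Matrix (Fin 3) (Fin 3) ℝ} (hJ : Jᵀ = J)
    (x : Fin 3 → ℝ) :
    hat x * hat x * nonstandardInertia J - nonstandardInertia J * (hat x * hat x)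
      = hat (x ⨯₃ (J *ᵥ x)) := by
  set S := hat x
  set Jd := nonstandardInertia J
  calc S * S * Jd - Jd * (S * S) = S * (S * Jd + Jd * S) - (S * Jd + Jd * S) * S := by
        noncomm_ring
    _ = hat (x ⨯₃ (J *ᵥ x)) := by
      rw [hat_mul_add_nonstandardInertia_mul_hat hJ, hat_mul_sub_hat_mul]

lemma quadratic_hat_mul_nonstandardInertia_sub_mul_transpose {J : Matrix (Fin 3) (Fin 3) ℝ}
    (hJ : Jᵀ = J) (x : Fin 3 → ℝ) (a b : ℝ) :
    let F := 1 + a • hat x + b • (hat x * hat x)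
    F * nonstandardInertia J - nonstandardInertia J * Fᵀ
      = hat (a • (J *ᵥ x) + b • (x ⨯₃ (J *ᵥ x))) := by
  intro F
  set S := hat x
  set Jd := nonstandardInertia J
  have hFt : Fᵀ = 1 - a • S + b • (S * S) := by
    simp only [F, transpose_add, transpose_one, transpose_smul, transpose_mul, hat_transpose,
      neg_mul_neg, smul_neg]
    abel
  calc F * Jd - Jd * Fᵀ = a • (S * Jd + Jd * S) + b • (S * S * Jd - Jd * (S * S)) := by
        rw [hFt]
        simp only [F, add_mul, mul_add, mul_sub, smul_mul_assoc, mul_smul_comm, smul_add,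
          smul_sub, one_mul, mul_one, mul_assoc]
        abel
    _ = hat (a • (J *ᵥ x) + b • (x ⨯₃ (J *ᵥ x))) := by
      rw [hat_mul_add_nonstandardInertia_mul_hat hJ, hat_sq_mul_nonstandardInertia_sub hJ,
        hat_add, hat_smul, hat_smul]

theorem lgvi_implicit_vector_form_general
    (J : Matrix (Fin 3) (Fin 3) ℝ) (hJ : J.transpose = J)
    (Jd : Matrix (Fin 3) (Fin 3) ℝ) (hJd : Jd = (((1 : ℝ) / 2) * J.trace) • (1 : Matrix (Fin 3) (Fin 3) ℝ) - J)
    (θ : Fin 3 → ℝ)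
    (F : Matrix (Fin 3) (Fin 3) ℝ)
    (hF : F = 1 + (Real.sin ‖toE θ‖ / ‖toE θ‖) • hat θ
            + ((1 - Real.cos ‖toE θ‖) / ‖toE θ‖ ^ 2) • (hat θ * hat θ))
    (g : Fin 3 → ℝ)
    (hg : g = (Real.sin ‖toE θ‖ / ‖toE θ‖) • J.mulVec θ
            + ((1 - Real.cos ‖toE θ‖) / ‖toE θ‖ ^ 2) • (θ ⨯₃ J.mulVec θ)) :
    F * Jd - Jd * F.transpose = hat g ∧
    ∀ (h : ℝ) (p : Fin 3 → ℝ),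
      (h • hat p = F * Jd - Jd * F.transpose ↔ h • p = g) := by
  have hcomm : F * Jd - Jd * F.transpose = hat g := by
    subst hF hg hJd
    exact quadratic_hat_mul_nonstandardInertia_sub_mul_transpose hJ θ _ _
  refine ⟨hcomm, fun h p => ?_⟩
  rw [hcomm, ← hat_smul, hat_injective.eq_iff]

theorem lgvi_implicit_vector_form
    (J : Matrix (Fin 3) (Fin 3) ℝ) (hJ : J.transpose = J)
    (Jd : Matrix (Fin 3) (Fin 3) ℝ) (hJd : Jd = (((1 : ℝ) / 2) * J.trace) • (1 : Matrix (Fin 3) (Fin 3) ℝ) - J)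
    (θ : Fin 3 → ℝ) (hθ : θ ≠ 0)
    (F : Matrix (Fin 3) (Fin 3) ℝ)
    (hF : F = 1 + (Real.sin ‖toE θ‖ / ‖toE θ‖) • hat θ
            + ((1 - Real.cos ‖toE θ‖) / ‖toE θ‖ ^ 2) • (hat θ * hat θ))
    (g : Fin 3 → ℝ)
    (hg : g = (Real.sin ‖toE θ‖ / ‖toE θ‖) • J.mulVec θ
            + ((1 - Real.cos ‖toE θ‖) / ‖toE θ‖ ^ 2) • (θ ⨯₃ J.mulVec θ)) :
    F * Jd - Jd * F.transpose = hat g ∧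
    ∀ (h : ℝ) (p : Fin 3 → ℝ),
      (h • hat p = F * Jd - Jd * F.transpose ↔ h • p = g) :=
  lgvi_implicit_vector_form_general J hJ Jd hJd θ F hF g hg
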